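/- arXiv:0707.3619 — 4 statements merged into one kernel-verified Lean document; each statement's English description precedes it below -/
import Mathlib

section
/- The distance product of two Monge matrices is Monge: if A, B are Monge matrices of compatible dimensions and C(i,k) = min_j (A(i,j) + B(j,k)), then C is Monge. -/
def IsMonge {a b : ℕ} (A : Fin a → Fin b → ℤ) : Prop :=
  ∀ i i' : Fin a, ∀ j j' : Fin b, i ≤ i' → j ≤ j' → A i j + A i' j' ≤ A i j' + A i' j

/-- The matrix distance product `C(i,k) = min_j (A(i,j) + B(j,k))`. -/
def distProd {a b c : ℕ} (A : Fin a → Fin (b+1) → ℤ) (B : Fin (b+1) → Fin c → ℤ)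
    (i : Fin a) (k : Fin c) : ℤ :=
  Finset.univ.inf' Finset.univ_nonempty (fun j => A i j + B j k)

/-!
Fix `i ≤ i'`, `k ≤ k'` and let `j`, `j'` attain the minima defining `C(i,k')` and `C(i',k)`.
If `j ≤ j'`, the Monge property of `B` swaps the columns `k, k'` between the rows `j, j'`;
otherwise that of `A` swaps `j, j'` between `i, i'`. Either way `C(i,k) + C(i',k')` is bounded
by the sum of two candidate terms, each dominating one of the minima.
-/

section DistProd

variable {a b c : ℕ} (A : Fin a → Fin (b+1) → ℤ) (B : Fin (b+1) → Fin c → ℤ)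

theorem distProd_le (i : Fin a) (j : Fin (b+1)) (k : Fin c) :
    distProd A B i k ≤ A i j + B j k :=
  Finset.inf'_le _ (Finset.mem_univ j)

theorem exists_distProd_eq (i : Fin a) (k : Fin c) :
    ∃ j, distProd A B i k = A i j + B j k := by
  obtain ⟨j, -, hj⟩ := Finset.exists_mem_eq_inf' Finset.univ_nonempty (fun j => A i j + B j k)
  exact ⟨j, hj⟩

variable {A B}

theorem distProd_add_distProd_le_cross (hA : IsMonge A) (hB : IsMonge B)
    {i i' : Fin a} {k k' : Fin c} (hi : i ≤ i') (hk : k ≤ k') (j j' : Fin (b+1)) :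
    distProd A B i k + distProd A B i' k' ≤ (A i j + B j k') + (A i' j' + B j' k) := by
  rcases le_total j j' with hjj' | hj'j
  · have := hB j j' k k' hjj' hk
    have := distProd_le A B i j k
    have := distProd_le A B i' j' k'
    linarith
  · have := hA i i' j' j hi hj'j
    have := distProd_le A B i j' k
    have := distProd_le A B i' j k'
    linarith

end DistProd

/-- the distance product of two Monge matrices is Monge. -/
theorem distProd_monge {a b c : ℕ} (A : Fin a → Fin (b+1) → ℤ) (B : Fin (b+1) → Fin c → ℤ)
    (hA : IsMonge A) (hB : IsMonge B) :
    IsMonge (fun i k => distProd A B i k) := by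
  intro i i' k k' hi hk
  show distProd A B i k + distProd A B i' k' ≤ distProd A B i k' + distProd A B i' k
  obtain ⟨j, hj⟩ := exists_distProd_eq A B i k'
  obtain ⟨j', hj'⟩ := exists_distProd_eq A B i' k
  rw [hj, hj']
  exact distProd_add_distProd_le_cross hA hB hi hk j j'
end

section
/- Dot criterion for Bruhat order: a permutation matrix P_A is below permutation matrix P_B in the Bruhat order if and only if P_A^Σ(i,j) ≤ P_B^Σ(i,j) for all i, j. -/
def PermMat {n : ℕ} (σ : Equiv.Perm (Fin n)) : Fin n → Fin n → ℤ :=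
  fun i j => if σ i = j then 1 else 0

def distSum {m n : ℕ} (D : Fin m → Fin n → ℤ) (i : Fin (m+1)) (j : Fin (n+1)) : ℤ :=
  ∑ p : Fin m, ∑ q : Fin n, if (i : ℕ) ≤ (p : ℕ) ∧ (q : ℕ) < (j : ℕ) then D p q else 0

/-- A single Bruhat step: a `2×2` submatrix of the form `[[1,0],[0,1]]`
(on rows `i < i'` and columns `j < j'`) is replaced by `[[0,1],[1,0]]`,
all other entries being unchanged. -/
def BruhatStep {n : ℕ} (P Q : Fin n → Fin n → ℤ) : Prop :=
  ∃ i i' j j' : Fin n, i < i' ∧ j < j' ∧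
    P i j = 1 ∧ P i j' = 0 ∧ P i' j = 0 ∧ P i' j' = 1 ∧
    Q i j = 0 ∧ Q i j' = 1 ∧ Q i' j = 1 ∧ Q i' j' = 0 ∧
    (∀ a b : Fin n, ¬ ((a = i ∨ a = i') ∧ (b = j ∨ b = j')) → Q a b = P a b)

/-- `P` is below `Q` in the Bruhat order: `P` can be transformed into `Q`
by a sequence of Bruhat steps. -/
def Bruhat {n : ℕ} (P Q : Fin n → Fin n → ℤ) : Prop :=
  Relation.ReflTransGen BruhatStep P Q

/-!
A Bruhat step adds to the matrix the rank-one matrix `stepDelta i i' j j'`, so it raises `distSum`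
by one on the rectangle `(i, i'] × (j, j']` and leaves it unchanged elsewhere; this gives one
direction, and shows that `∑ distSum` strictly increases along steps.

Conversely, let `distSum a ≤ distSum b` with `a ≠ b`. Take the last row `k` where `a` and `b`
differ (then `b k < a k`) and the last row `l < k` with `b k ≤ a l < a k`. No dot of `a` strictly
between rows `l` and `k` lies in the columns `[b k, a k)`, and comparing counts with those at
column `b k` shows `distSum a < distSum b` on the whole rectangle spanned by the dots `(l, a l)`
and `(k, a k)`. Swapping these two dots is therefore a Bruhat step that keeps
`distSum a ≤ distSum b`, and iterating reaches `b`.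
-/
open Finset

namespace Equiv.Perm

variable {n : ℕ}

def dotCount (x : Perm (Fin n)) (u w v : ℕ) : ℕ :=
  #{p : Fin n | u ≤ p ∧ p < w ∧ x p < v}

theorem dotCount_add (x : Perm (Fin n)) {u w z : ℕ} (huw : u ≤ w) (hwz : w ≤ z) (v : ℕ) :
    x.dotCount u w v + x.dotCount w z v = x.dotCount u z v := by
  simp only [dotCount, card_filter, ← sum_add_distrib]
  exact sum_congr rfl fun p _ => by split_ifs <;> omega

@[simp]
theorem dotCount_self (x : Perm (Fin n)) (u v : ℕ) : x.dotCount u u v = 0 := by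
  simp only [dotCount, card_eq_zero, filter_eq_empty_iff]
  omega

theorem dotCount_succ (x : Perm (Fin n)) (k : Fin n) (v : ℕ) :
    x.dotCount k (k + 1) v = if x k < v then 1 else 0 := by
  rw [dotCount, card_filter, sum_eq_single k (fun p _ hp => if_neg ?_) (by simp)]
  · simp
  · have := Fin.val_ne_of_ne hp
    omega

theorem dotCount_mono (x : Perm (Fin n)) (u w : ℕ) {v v' : ℕ} (hv : v ≤ v') :
    x.dotCount u w v ≤ x.dotCount u w v' :=
  card_le_card fun p hp => by simp only [mem_filter, mem_univ, true_and] at hp ⊢; omega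

theorem dotCount_congr {x y : Perm (Fin n)} {u w : ℕ}
    (h : ∀ p : Fin n, u ≤ p → p < w → x p = y p) (v : ℕ) :
    x.dotCount u w v = y.dotCount u w v :=
  congrArg card <| filter_congr fun p _ => by
    constructor <;> rintro ⟨h1, h2, h3⟩ <;> simp_all

theorem dotCount_eq_of_forall_notMem_Ico (x : Perm (Fin n)) {u w v v' : ℕ} (hv : v ≤ v')
    (h : ∀ p : Fin n, u ≤ p → p < w → (x p : ℕ) ∉ Set.Ico v v') :
    x.dotCount u w v = x.dotCount u w v' :=
  congrArg card <| filter_congr fun p _ => by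
    have := h p
    simp only [Set.mem_Ico, not_and, not_lt] at this
    omega

end Equiv.Perm

theorem distSum_permMat {n : ℕ} (x : Equiv.Perm (Fin n)) (i j : Fin (n + 1)) :
    distSum (PermMat x) i j = x.dotCount i n j := by
  simp only [distSum, PermMat, Equiv.Perm.dotCount, card_filter, Nat.cast_sum]
  refine sum_congr rfl fun p _ => ?_
  rw [sum_eq_single (x p) (fun q _ hq => by simp [Ne.symm hq]) (by simp)]
  simp [p.isLt]

section StepDelta

open Matrix

variable {m n : ℕ}

theorem distSum_add (P Q : Fin m → Fin n → ℤ) (i : Fin (m + 1)) (j : Fin (n + 1)) :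
    distSum (P + Q) i j = distSum P i j + distSum Q i j := by
  simp only [distSum, Pi.add_apply, ← sum_add_distrib]
  exact sum_congr rfl fun p _ => sum_congr rfl fun q _ => by split_ifs <;> simp

theorem distSum_vecMulVec (r : Fin m → ℤ) (c : Fin n → ℤ) (i : Fin (m + 1)) (j : Fin (n + 1)) :
    distSum (vecMulVec r c) i j =
      (∑ p : Fin m, if (i : ℕ) ≤ p then r p else 0) *
        ∑ q : Fin n, if (q : ℕ) < j then c q else 0 := by
  simp only [distSum, sum_mul_sum, vecMulVec_apply]
  exact sum_congr rfl fun p _ => sum_congr rfl fun q _ => by split_ifs <;> simp_all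

/-- `-1` at `(i, j)` and `(i', j')`, `+1` at `(i, j')` and `(i', j)`. -/
def stepDelta (i i' : Fin m) (j j' : Fin n) : Fin m → Fin n → ℤ :=
  vecMulVec (Pi.single i' 1 - Pi.single i 1) (Pi.single j 1 - Pi.single j' 1)

theorem stepDelta_apply (i i' : Fin m) (j j' : Fin n) (a : Fin m) (b : Fin n) :
    stepDelta i i' j j' a b =
      ((if a = i' then 1 else 0) - if a = i then 1 else 0) *
        ((if b = j then 1 else 0) - if b = j' then 1 else 0) := by
  simp [stepDelta, vecMulVec_apply, Pi.single_apply]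

theorem stepDelta_apply_eq_zero {i i' a : Fin m} {j j' b : Fin n}
    (hab : ¬((a = i ∨ a = i') ∧ (b = j ∨ b = j'))) : stepDelta i i' j j' a b = 0 := by
  rw [stepDelta_apply]
  rcases not_and_or.mp hab with ha | hb
  · simp [not_or.mp ha]
  · simp [not_or.mp hb]

theorem distSum_stepDelta {i i' : Fin m} {j j' : Fin n} (hi : i < i') (hj : j < j')
    (i₀ : Fin (m + 1)) (j₀ : Fin (n + 1)) :
    distSum (stepDelta i i' j j') i₀ j₀ =
      if ((i : ℕ) < i₀ ∧ (i₀ : ℕ) ≤ i') ∧ ((j : ℕ) < j₀ ∧ (j₀ : ℕ) ≤ j') then 1 else 0 := by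
  rw [stepDelta, distSum_vecMulVec]
  simp only [← sum_filter, Pi.sub_apply, sum_sub_distrib, sum_pi_single', mem_filter, mem_univ,
    true_and]
  rw [Fin.lt_def] at hi hj
  split_ifs <;> omega

end StepDelta

theorem bruhatStep_iff {n : ℕ} {P Q : Fin n → Fin n → ℤ} :
    BruhatStep P Q ↔ ∃ i i' j j' : Fin n, i < i' ∧ j < j' ∧
      P i j = 1 ∧ P i j' = 0 ∧ P i' j = 0 ∧ P i' j' = 1 ∧ Q = P + stepDelta i i' j j' := by
  constructor
  · rintro ⟨i, i', j, j', hi, hj, h1, h2, h3, h4, h5, h6, h7, h8, hQ⟩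
    refine ⟨i, i', j, j', hi, hj, h1, h2, h3, h4, funext₂ fun a b => ?_⟩
    by_cases hab : (a = i ∨ a = i') ∧ (b = j ∨ b = j')
    · obtain ⟨rfl | rfl, rfl | rfl⟩ := hab <;>
        simp [stepDelta_apply, hi.ne, hi.ne', hj.ne, hj.ne', *]
    · simp [hQ a b hab, stepDelta_apply_eq_zero hab]
  · rintro ⟨i, i', j, j', hi, hj, h1, h2, h3, h4, rfl⟩
    refine ⟨i, i', j, j', hi, hj, h1, h2, h3, h4, ?_, ?_, ?_, ?_,
      fun a b hab => by simp [stepDelta_apply_eq_zero hab]⟩ <;>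
      simp [stepDelta_apply, hi.ne, hi.ne', hj.ne, hj.ne', *]

section Bruhat

variable {n : ℕ} {P Q : Fin n → Fin n → ℤ}

theorem BruhatStep.exists_distSum_eq (h : BruhatStep P Q) :
    ∃ i i' j j' : Fin n, i < i' ∧ j < j' ∧ ∀ i₀ j₀, distSum Q i₀ j₀ = distSum P i₀ j₀ +
      if ((i : ℕ) < i₀ ∧ (i₀ : ℕ) ≤ i') ∧ ((j : ℕ) < j₀ ∧ (j₀ : ℕ) ≤ j') then 1 else 0 := by
  obtain ⟨i, i', j, j', hi, hj, -, -, -, -, rfl⟩ := bruhatStep_iff.1 h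
  exact ⟨i, i', j, j', hi, hj, fun i₀ j₀ => by rw [distSum_add, distSum_stepDelta hi hj]⟩

theorem BruhatStep.distSum_le (h : BruhatStep P Q) (i j : Fin (n + 1)) :
    distSum P i j ≤ distSum Q i j := by
  obtain ⟨_, _, _, _, -, -, hQ⟩ := h.exists_distSum_eq
  rw [hQ]
  split_ifs <;> omega

theorem BruhatStep.sum_distSum_lt (h : BruhatStep P Q) :
    ∑ i, ∑ j, distSum P i j < ∑ i, ∑ j, distSum Q i j := by
  obtain ⟨i, i', j, j', hi, hj, hQ⟩ := h.exists_distSum_eq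
  refine sum_lt_sum (fun i₀ _ => sum_le_sum fun j₀ _ => h.distSum_le i₀ j₀)
    ⟨i.succ, mem_univ _, sum_lt_sum (fun j₀ _ => h.distSum_le _ j₀) ⟨j.succ, mem_univ _, ?_⟩⟩
  rw [hQ, if_pos (by simp only [Fin.val_succ]; omega)]
  omega

theorem Bruhat.distSum_le (h : Bruhat P Q) (i j : Fin (n + 1)) :
    distSum P i j ≤ distSum Q i j := by
  induction h with
  | refl => exact le_rfl
  | tail _ hstep ih => exact ih.trans (hstep.distSum_le i j)

end Bruhat

namespace Equiv.Perm

variable {n : ℕ}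

theorem permMat_mul_swap (a : Perm (Fin n)) {k l : Fin n} (hkl : k ≠ l) :
    PermMat (a * swap k l) = PermMat a + stepDelta k l (a k) (a l) := by
  funext p q
  obtain ⟨r, rfl⟩ := a.surjective q
  simp only [PermMat, Pi.add_apply, stepDelta_apply, Perm.mul_apply, a.apply_eq_iff_eq,
    swap_apply_def]
  split_ifs <;> subst_vars <;> simp_all

theorem bruhatStep_permMat_mul_swap (a : Perm (Fin n)) {k l : Fin n} (hkl : k < l)
    (ha : a k < a l) : BruhatStep (PermMat a) (PermMat (a * swap k l)) :=
  bruhatStep_iff.2 ⟨k, l, a k, a l, hkl, ha, by simp [PermMat], by simp [PermMat, ha.ne],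
    by simp [PermMat, ha.ne'], by simp [PermMat], permMat_mul_swap a hkl.ne⟩

theorem dotCount_split (x : Perm (Fin n)) {u : ℕ} {k : Fin n} (hu : u ≤ k) (v : ℕ) :
    x.dotCount u n v = x.dotCount u k v + (if x k < v then 1 else 0) + x.dotCount (k + 1) n v := by
  rw [← dotCount_succ, add_assoc, dotCount_add x (Nat.le_succ _) k.isLt,
    dotCount_add x hu k.isLt.le]

theorem exists_lt_forall_lt_eq_of_dotCount_le {a b : Perm (Fin n)} (hab : a ≠ b)
    (h : ∀ u v, u ≤ n → v ≤ n → a.dotCount u n v ≤ b.dotCount u n v) :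
    ∃ k : Fin n, b k < a k ∧ ∀ p, k < p → a p = b p := by
  obtain ⟨k, hk, hk_max⟩ := (univ.filter fun p => a p ≠ b p).exists_max_image id
    (by simpa [filter_nonempty_iff, Equiv.ext_iff] using hab)
  have hne : (a k : ℕ) ≠ b k := Fin.val_ne_of_ne (by simpa using hk)
  have hagree : ∀ p, k < p → a p = b p := fun p hp => by
    by_contra hp'
    exact (hk_max p (by simpa using hp')).not_gt hp
  refine ⟨k, ?_, hagree⟩
  have hle := h k (a k + 1) k.isLt.le (a k).isLt
  rw [dotCount_split a le_rfl, dotCount_split b le_rfl, dotCount_self, dotCount_self,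
    dotCount_congr (fun p hp _ => hagree p (by omega))] at hle
  rw [Fin.lt_def]
  split_ifs at hle <;> omega

theorem exists_rectangle_dotCount_lt {a b : Perm (Fin n)} (hab : a ≠ b)
    (h : ∀ u v, u ≤ n → v ≤ n → a.dotCount u n v ≤ b.dotCount u n v) :
    ∃ l k : Fin n, l < k ∧ a l < a k ∧ ∀ u v : ℕ, (l : ℕ) < u → u ≤ k → (a l : ℕ) < v →
      v ≤ a k → a.dotCount u n v < b.dotCount u n v := by
  obtain ⟨k, hbk, hagree⟩ := exists_lt_forall_lt_eq_of_dotCount_le hab h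
  have htail : ∀ v, a.dotCount (k + 1) n v = b.dotCount (k + 1) n v :=
    dotCount_congr fun p hp _ => hagree p (by omega)
  have hm : a.symm (b k) < k := by
    refine lt_of_le_of_ne (not_lt.1 fun hkm => ?_) fun hmk => ?_
    · have hbm := hagree _ hkm
      rw [apply_symm_apply] at hbm
      exact hkm.ne (b.injective hbm)
    · exact hbk.ne' ((a.symm_apply_eq).1 hmk).symm
  obtain ⟨l, hl, hl_max⟩ :=
    (univ.filter fun p => p < k ∧ b k ≤ a p ∧ a p < a k).exists_max_image id
      ⟨a.symm (b k), by simp [hm, hbk]⟩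
  simp only [mem_filter, mem_univ, true_and] at hl
  obtain ⟨hlk, hbl, hlk'⟩ := hl
  have hgap : ∀ p : Fin n, (l : ℕ) < p → (p : ℕ) < k → (a p : ℕ) ∉ Set.Ico (b k : ℕ) (a k) :=
    fun p hlp hpk ⟨hbp, hpk'⟩ => (hl_max p (by
      simp only [mem_filter, mem_univ, true_and, Fin.lt_def, Fin.le_def]; omega)).not_gt hlp
  refine ⟨l, k, hlk, hlk', fun u v hlu huk hlv hvk => ?_⟩
  rw [Fin.le_def] at hbl
  rw [Fin.lt_def] at hbk
  have hbv : (b k : ℕ) < v := hbl.trans_lt hlv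
  have ha_gap : a.dotCount u k v = a.dotCount u k (b k) :=
    (dotCount_eq_of_forall_notMem_Ico a hbv.le fun p hup hpk hm =>
      hgap p (by omega) hpk ⟨hm.1, hm.2.trans_le hvk⟩).symm
  have hb_mono := b.dotCount_mono u k hbv.le
  have hle := h u (b k) (huk.trans k.isLt.le) (b k).isLt.le
  rw [dotCount_split a huk, dotCount_split b huk, htail] at hle ⊢
  split_ifs at hle ⊢ <;> omega

end Equiv.Perm

open Equiv

theorem exists_bruhatStep_of_distSum_le {n : ℕ} {a b : Perm (Fin n)} (hab : a ≠ b)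
    (h : ∀ i j, distSum (PermMat a) i j ≤ distSum (PermMat b) i j) :
    ∃ a' : Perm (Fin n), BruhatStep (PermMat a) (PermMat a') ∧
      ∀ i j, distSum (PermMat a') i j ≤ distSum (PermMat b) i j := by
  simp only [distSum_permMat, Nat.cast_le] at h
  obtain ⟨l, k, hlk, ha, hlt⟩ := Perm.exists_rectangle_dotCount_lt hab
    fun u v hu hv => h ⟨u, by omega⟩ ⟨v, by omega⟩
  refine ⟨a * swap l k, Perm.bruhatStep_permMat_mul_swap a hlk ha, fun i j => ?_⟩
  rw [Perm.permMat_mul_swap a hlk.ne, distSum_add, distSum_stepDelta hlk ha, distSum_permMat,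
    distSum_permMat]
  split_ifs with hij
  · exact_mod_cast hlt i j hij.1.1 hij.1.2 hij.2.1 hij.2.2
  · simpa using h i j

theorem bruhat_of_distSum_le {n : ℕ} (a b : Perm (Fin n))
    (h : ∀ i j, distSum (PermMat a) i j ≤ distSum (PermMat b) i j) :
    Bruhat (PermMat a) (PermMat b) := by
  by_cases hab : a = b
  · exact hab ▸ .refl
  obtain ⟨a', hstep, h'⟩ := exists_bruhatStep_of_distSum_le hab h
  have hlt := hstep.sum_distSum_lt
  exact .head hstep (bruhat_of_distSum_le a' b h')
termination_by (∑ i, ∑ j, (distSum (PermMat b) i j - distSum (PermMat a) i j)).toNat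
decreasing_by
  have hle := sum_le_sum fun i (_ : i ∈ univ) => sum_le_sum fun j (_ : j ∈ univ) => h' i j
  simp only [sum_sub_distrib]
  omega

/-- the dot criterion for the Bruhat order:
`P_A` is below `P_B` in the Bruhat order iff `P_A^Σ ≤ P_B^Σ` elementwise. -/
theorem bruhat_iff_distSum_le {n : ℕ} (σA σB : Equiv.Perm (Fin n)) :
    Bruhat (PermMat σA) (PermMat σB) ↔
      ∀ i j : Fin (n+1), distSum (PermMat σA) i j ≤ distSum (PermMat σB) i j :=
  ⟨Bruhat.distSum_le, bruhat_of_distSum_le σA σB⟩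
end

section
/- The semi-local score matrix is unit-anti-Monge: for strings a of length m and b of length n, there exists a permutation matrix P_{a,b} over ⟨−m:n | 0:m+n⟩ such that H_{a,b}(i,j) = j − i − P_{a,b}^Σ(i,j) for all i ∈ [−m:n], j ∈ [0:m+n]. -/
/-- Highest path score in the alignment dag of a string against a string with
wildcards (`none` is the wildcard `◇`, matching every character): equivalently,
a longest-common-subsequence score where a wildcard matches everything. -/
def wlcs {α : Type*} [DecidableEq α] : List α → List (Option α) → ℕ
  | [], _ => 0
  | _ :: _, [] => 0
  | x :: xs, y :: ys =>
      max (max (wlcs (x :: xs) ys) (wlcs xs (y :: ys)))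
        ((if y = none ∨ y = some x then 1 else 0) + wlcs xs ys)
termination_by a b => a.length + b.length

/-- The string `◇^m b ◇^m`. -/
def padded {α : Type*} (m : ℕ) (b : List α) : List (Option α) :=
  List.replicate m none ++ b.map some ++ List.replicate m none

/-- The semi-local score matrix `H_{a,b}`, with the row index shifted from
`[−m:n]` to `[0:m+n]`: `H(i,j)` is the highest score of a path
`v_{0,i−m} → v_{m,j}` in the alignment dag `G_{a, ◇^m b ◇^m}`, i.e. the
score of `a` against the substring `(◇^m b ◇^m)⟨i−m:j⟩`; by convention
`H(i,j) = j − (i−m)` when `j < i−m`. -/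
def Hsem {α : Type*} [DecidableEq α] (a b : List α) (m : ℕ) (i j : ℕ) : ℤ :=
  if i ≤ j + m then (wlcs a (((padded m b).drop i).take (j + m - i)) : ℤ)
  else (j : ℤ) + m - i

/-!
With `N = m + n`, put `d(i,j) = j + m - i - H(i,j)`. On the boundary of `[0,N]²` the function
`d` looks like the distribution function of a permutation: it vanishes on the column `j = 0` and
the row `i = N`, and `d(0,j) = j`, `d(i,N) = N - i`. Hence the cross differences of `d` have unit
row and column sums, and `d` is the distribution function of its cross-difference matrix. That
matrix is a permutation matrix once its entries are nonnegative, which is the local Monge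
inequality `H(p,q+1) + H(p+1,q) ≤ H(p,q) + H(p+1,q+1)`. Away from the linear region this
compares four windows `c y`, `c y e`, `y`, `y e` of `◇^m b ◇^m`, and the inequality for the
score is proved by induction on `a`, simultaneously with the mixed inequality in which the first
character of `a` plays the role of `c`.
-/

section Wlcs

variable {α : Type*} [DecidableEq α]

@[simp]
theorem wlcs_nil_left (y : List (Option α)) : wlcs [] y = 0 := by
  rw [wlcs]

@[simp]
theorem wlcs_nil_right (x : List α) : wlcs x [] = 0 := by
  cases x <;> rw [wlcs]

theorem wlcs_cons_cons (x : α) (xs : List α) (y : Option α) (ys : List (Option α)) :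
    wlcs (x :: xs) (y :: ys) = max (max (wlcs (x :: xs) ys) (wlcs xs (y :: ys)))
      ((if y = none ∨ y = some x then 1 else 0) + wlcs xs ys) := by
  rw [wlcs]

theorem wlcs_le_wlcs_cons_left (x : α) (xs : List α) (y : List (Option α)) :
    wlcs xs y ≤ wlcs (x :: xs) y := by
  cases y with
  | nil => simp
  | cons y ys => rw [wlcs_cons_cons]; omega

theorem wlcs_le_wlcs_cons_right (x : List α) (y : Option α) (ys : List (Option α)) :
    wlcs x ys ≤ wlcs x (y :: ys) := by
  cases x with
  | nil => simp
  | cons x xs => rw [wlcs_cons_cons]; omega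

theorem wlcs_mono_right (x : List α) {y y' : List (Option α)} (h : y.Sublist y') :
    wlcs x y ≤ wlcs x y' := by
  induction x generalizing y y' with
  | nil => simp
  | cons x xs ih =>
    induction h with
    | slnil => rfl
    | cons c _ ih' => exact ih'.trans (wlcs_le_wlcs_cons_right _ _ _)
    | cons_cons c h ih' =>
      have := ih h
      have := ih (h.cons_cons c)
      rw [wlcs_cons_cons, wlcs_cons_cons]
      omega

theorem wlcs_le_length_left (x : List α) (y : List (Option α)) : wlcs x y ≤ x.length := by
  fun_induction wlcs x y with
  | case3 => simp only [List.length_cons] at *; split_ifs <;> omega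
  | _ => simp

theorem wlcs_le_length_right (x : List α) (y : List (Option α)) : wlcs x y ≤ y.length := by
  fun_induction wlcs x y with
  | case3 => simp only [List.length_cons] at *; split_ifs <;> omega
  | _ => simp

theorem wlcs_replicate_none (x : List α) (k : ℕ) :
    wlcs x (List.replicate k none) = min x.length k := by
  induction x generalizing k with
  | nil => simp
  | cons x xs ih =>
    induction k with
    | zero => simp
    | succ k ihk =>
      have h := ih (k + 1)
      rw [List.replicate_succ] at h ⊢
      rw [wlcs_cons_cons, ihk, h, ih k]
      simp only [List.length_cons, true_or, ↓reduceIte]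
      omega

theorem wlcs_eq_length_of_replicate_sublist {x : List α} {y : List (Option α)}
    (h : (List.replicate x.length none).Sublist y) : wlcs x y = x.length :=
  (wlcs_le_length_left x y).antisymm
    (by simpa [wlcs_replicate_none] using wlcs_mono_right x h)

theorem wlcs_append_add_cons_le {xs : List α}
    (hxs : ∀ c y e,
      wlcs xs (c :: (y ++ [e])) + wlcs xs y ≤ wlcs xs (c :: y) + wlcs xs (y ++ [e]))
    (x : α) (y : List (Option α)) (e : Option α) :
    wlcs xs (y ++ [e]) + wlcs (x :: xs) y ≤ wlcs (x :: xs) (y ++ [e]) + wlcs xs y := by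
  induction y with
  | nil => simpa using wlcs_le_wlcs_cons_left x xs [e]
  | cons c y ih =>
    have := hxs c y e
    simp only [List.cons_append] at ih ⊢
    rw [wlcs_cons_cons x xs c y, wlcs_cons_cons x xs c (y ++ [e])]
    omega

theorem wlcs_cons_append_add_le (x : List α) (c : Option α) (y : List (Option α))
    (e : Option α) :
    wlcs x (c :: (y ++ [e])) + wlcs x y ≤ wlcs x (c :: y) + wlcs x (y ++ [e]) := by
  induction x generalizing c y e with
  | nil => simp
  | cons x xs ih =>
    have := ih c y e
    have := wlcs_append_add_cons_le ih x y e
    rw [wlcs_cons_cons x xs c (y ++ [e]), wlcs_cons_cons x xs c y]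
    omega

theorem wlcs_window_cross_le (x : List α) (s : List (Option α)) {i k : ℕ}
    (h : i + k + 1 < s.length) :
    wlcs x ((s.drop i).take (k + 2)) + wlcs x ((s.drop (i + 1)).take k)
      ≤ wlcs x ((s.drop i).take (k + 1)) + wlcs x ((s.drop (i + 1)).take (k + 1)) := by
  have hsnoc : (s.drop (i + 1)).take (k + 1) = (s.drop (i + 1)).take k ++ [s[i + 1 + k]] := by
    rw [List.take_add_one, List.getElem?_drop, List.getElem?_eq_getElem (by omega)]
    rfl
  rw [List.drop_eq_getElem_cons (by omega : i < s.length), List.take_succ_cons,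
    List.take_succ_cons, hsnoc]
  exact wlcs_cons_append_add_le x _ _ _

end Wlcs

section Hsem

variable {α : Type*}

theorem padded_eq_replicate_append (m : ℕ) (b : List α) :
    padded m b = List.replicate m none ++ (b.map some ++ List.replicate m none) := by
  rw [padded, List.append_assoc]

variable [DecidableEq α]

theorem Hsem_le (a b : List α) (m i j : ℕ) : Hsem a b m i j ≤ (j : ℤ) + m - i := by
  unfold Hsem
  split_ifs with h
  · have := wlcs_le_length_right a (((padded m b).drop i).take (j + m - i))
    simp only [List.length_take] at this
    omega
  · rfl

theorem Hsem_of_le (a b : List α) {m i j : ℕ} (h : j + m ≤ i) :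
    Hsem a b m i j = (j : ℤ) + m - i := by
  unfold Hsem
  split_ifs
  · rw [show j + m - i = 0 by omega, List.take_zero, wlcs_nil_right, Nat.cast_zero]
    omega
  · rfl

theorem Hsem_col_zero (a b : List α) (i : ℕ) :
    Hsem a b a.length i 0 = (a.length : ℤ) - i := by
  rcases le_total a.length i with h | h
  · simpa using Hsem_of_le a b (by omega : 0 + a.length ≤ i)
  · have hwin : ((padded a.length b).drop i).take (0 + a.length - i)
        = List.replicate (a.length - i) none := by
      rw [padded_eq_replicate_append, List.drop_append_of_le_length (by simpa),
        List.drop_replicate, zero_add]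
      exact List.take_left' (by simp)
    rw [Hsem, if_pos (by omega), hwin, wlcs_replicate_none]
    omega

theorem Hsem_row_last (a b : List α) {j : ℕ} (hj : j ≤ a.length + b.length) :
    Hsem a b a.length (a.length + b.length) j = (j : ℤ) - b.length := by
  rcases le_total j b.length with h | h
  · rw [Hsem_of_le a b (by omega)]
    push_cast
    ring
  · have hwin : ((padded a.length b).drop (a.length + b.length)).take
        (j + a.length - (a.length + b.length)) = List.replicate (j - b.length) none := by
      rw [padded, List.drop_left' (by simp), List.take_replicate]
      congr 1
      omega
    rw [Hsem, if_pos (by omega), hwin, wlcs_replicate_none]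
    omega

theorem Hsem_row_zero (a b : List α) (j : ℕ) : Hsem a b a.length 0 j = a.length := by
  rw [Hsem, if_pos (by omega), wlcs_eq_length_of_replicate_sublist]
  refine (List.prefix_of_prefix_length_le (l₃ := padded a.length b) ?_ ?_ ?_).sublist
  · exact padded_eq_replicate_append a.length b ▸ List.prefix_append _ _
  · exact (List.drop_zero ▸ List.take_prefix _ _)
  · simp [padded]

theorem Hsem_col_last (a b : List α) {i : ℕ} (hi : i ≤ a.length + b.length) :
    Hsem a b a.length i (a.length + b.length) = a.length := by
  rw [Hsem, if_pos (by omega), wlcs_eq_length_of_replicate_sublist]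
  rw [List.take_of_length_le (by simp [padded]; omega)]
  refine (List.suffix_of_suffix_length_le (l₃ := padded a.length b) ?_ ?_ ?_).sublist
  · exact List.suffix_append _ _
  · exact List.drop_suffix _ _
  · simp [padded]
    omega

theorem Hsem_cross_le (a b : List α) {m p q : ℕ} (hq : q < m + b.length) :
    Hsem a b m p (q + 1) + Hsem a b m (p + 1) q
      ≤ Hsem a b m p q + Hsem a b m (p + 1) (q + 1) := by
  rcases lt_or_ge p (q + m) with h | h
  · obtain ⟨k, hk⟩ : ∃ k, q + m = p + k + 1 := ⟨q + m - p - 1, by omega⟩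
    have := wlcs_window_cross_le a (padded m b) (i := p) (k := k) (by simp [padded]; omega)
    unfold Hsem
    rw [if_pos (by omega), if_pos (by omega), if_pos (by omega), if_pos (by omega),
      show q + 1 + m - p = k + 2 by omega, show q + m - (p + 1) = k by omega,
      show q + m - p = k + 1 by omega, show q + 1 + m - (p + 1) = k + 1 by omega]
    exact_mod_cast this
  · have := Hsem_le a b m p (q + 1)
    rw [Hsem_of_le a b (by omega : q + m ≤ p), Hsem_of_le a b (by omega : q + m ≤ p + 1),
      Hsem_of_le a b (by omega : q + 1 + m ≤ p + 1)]
    push_cast at this ⊢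
    omega

end Hsem

section CrossDiff

open Finset

def crossDiff (d : ℕ → ℕ → ℤ) (p q : ℕ) : ℤ :=
  d p (q + 1) + d (p + 1) q - d p q - d (p + 1) (q + 1)

theorem sum_Ico_sum_Ico_crossDiff (d : ℕ → ℕ → ℤ) {i k j l : ℕ} (hik : i ≤ k)
    (hjl : j ≤ l) :
    ∑ p ∈ Ico i k, ∑ q ∈ Ico j l, crossDiff d p q = d i l - d i j - d k l + d k j := by
  have hrow (p : ℕ) : ∑ q ∈ Ico j l, crossDiff d p q
      = (d p l - d (p + 1) l) - (d p j - d (p + 1) j) := by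
    rw [← sum_Ico_sub (fun q => d p q - d (p + 1) q) hjl]
    exact sum_congr rfl fun q _ => by unfold crossDiff; ring
  calc ∑ p ∈ Ico i k, ∑ q ∈ Ico j l, crossDiff d p q
      = ∑ p ∈ Ico i k, ((d (p + 1) j - d (p + 1) l) - (d p j - d p l)) :=
        sum_congr rfl fun p _ => by rw [hrow]; ring
    _ = d i l - d i j - d k l + d k j := by
        rw [sum_Ico_sub (fun p => d p j - d p l) hik]
        ring

theorem exists_permMat_eq_of_sum_eq_one {N : ℕ} (M : Fin N → Fin N → ℤ)
    (hM : ∀ p q, 0 ≤ M p q) (hrow : ∀ p, ∑ q, M p q = 1) (hcol : ∀ q, ∑ p, M p q = 1) :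
    ∃ σ : Equiv.Perm (Fin N), PermMat σ = M := by
  have hpos (p : Fin N) : ∃ q, 0 < M p q := by
    by_contra! h
    have := sum_nonpos fun q (_ : q ∈ univ) => h q
    rw [hrow p] at this
    omega
  choose f hf using hpos
  have hf_eq (p : Fin N) : M p (f p) = 1 := by
    have := single_le_sum (fun q _ => hM p q) (mem_univ (f p))
    have := hf p
    rw [hrow p] at *
    omega
  have hf_ne (p q : Fin N) (hq : f p ≠ q) : M p q = 0 := by
    have := add_le_sum (fun q _ => hM p q) (mem_univ (f p)) (mem_univ q) hq
    have := hM p q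
    rw [hrow p, hf_eq p] at *
    omega
  have hf_inj : Function.Injective f := by
    intro p p' h
    by_contra hne
    have := add_le_sum (f := (M · (f p))) (fun k _ => hM k (f p)) (mem_univ p) (mem_univ p') hne
    rw [hcol, hf_eq, h, hf_eq] at this
    omega
  refine ⟨Equiv.ofBijective f hf_inj.bijective_of_finite, funext₂ fun p q => ?_⟩
  by_cases h : f p = q
  · simp [PermMat, h, ← hf_eq p]
  · simp [PermMat, h, hf_ne p q h]

theorem distSum_eq_sum_Ico {m n : ℕ} (D : ℕ → ℕ → ℤ) (i : Fin (m + 1))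
    (j : Fin (n + 1)) :
    distSum (fun (p : Fin m) (q : Fin n) => D p q) i j
      = ∑ p ∈ Ico (i : ℕ) m, ∑ q ∈ Ico 0 (j : ℕ), D p q := by
  simp only [distSum, ite_and, sum_ite_irrel, sum_const_zero]
  rw [Fin.sum_univ_eq_sum_range
      (fun p => if (i : ℕ) ≤ p then ∑ q : Fin n, if (q : ℕ) < j then D p q else 0 else 0),
    ← sum_filter]
  refine sum_congr (by ext; simp [and_comm]) fun p _ => ?_
  rw [Fin.sum_univ_eq_sum_range (fun q => if q < (j : ℕ) then D p q else 0), ← sum_filter]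
  exact sum_congr (by ext; simp; omega) fun _ _ => rfl

theorem exists_perm_eq_distSum_of_crossDiff_nonneg {N : ℕ} (d : ℕ → ℕ → ℤ)
    (hcol_zero : ∀ i ≤ N, d i 0 = 0) (hrow_last : ∀ j ≤ N, d N j = 0)
    (hrow_zero : ∀ j ≤ N, d 0 j = j) (hcol_last : ∀ i ≤ N, d i N = N - i)
    (hcross : ∀ p < N, ∀ q < N, 0 ≤ crossDiff d p q) :
    ∃ σ : Equiv.Perm (Fin N), ∀ i j : Fin (N + 1), d i j = distSum (PermMat σ) i j := by
  have hrow (p : Fin N) : ∑ q : Fin N, crossDiff d p q = 1 := by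
    have := sum_Ico_sum_Ico_crossDiff d (Nat.le_succ p) (Nat.zero_le N)
    rw [Nat.Ico_succ_singleton, sum_singleton, ← range_eq_Ico] at this
    rw [Fin.sum_univ_eq_sum_range (crossDiff d p), this, hcol_last p p.2.le,
      hcol_last (p + 1) p.2, hcol_zero p p.2.le, hcol_zero (p + 1) p.2]
    push_cast
    ring
  have hcol (q : Fin N) : ∑ p : Fin N, crossDiff d p q = 1 := by
    have := sum_Ico_sum_Ico_crossDiff d (Nat.zero_le N) (Nat.le_succ q)
    simp only [Nat.Ico_succ_singleton, sum_singleton, ← range_eq_Ico] at this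
    rw [Fin.sum_univ_eq_sum_range (crossDiff d · q), this, hrow_zero q q.2.le,
      hrow_zero (q + 1) q.2, hrow_last q q.2.le, hrow_last (q + 1) q.2]
    push_cast
    ring
  obtain ⟨σ, hσ⟩ := exists_permMat_eq_of_sum_eq_one (fun p q : Fin N => crossDiff d p q)
    (fun p q => hcross p p.2 q q.2) hrow hcol
  refine ⟨σ, fun i j => ?_⟩
  have hi : (i : ℕ) ≤ N := Nat.lt_succ_iff.mp i.2
  have hj : (j : ℕ) ≤ N := Nat.lt_succ_iff.mp j.2
  rw [hσ, distSum_eq_sum_Ico, sum_Ico_sum_Ico_crossDiff d hi (Nat.zero_le _), hcol_zero i hi,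
    hrow_last j hj, hcol_zero N le_rfl]
  ring

end CrossDiff

/-- the semi-local score matrix is unit-anti-Monge: there is a
permutation matrix `P_{a,b}` over `⟨−m:n | 0:m+n⟩` (row indices shifted to
`⟨0:m+n⟩`) with `H_{a,b}(i,j) = j − i − P_{a,b}^Σ(i,j)` for all
`i ∈ [−m:n]`, `j ∈ [0:m+n]`. -/
theorem semiLocal_unit_anti_monge {α : Type*} [DecidableEq α]
    (m n : ℕ) (a b : List α) (ha : a.length = m) (hb : b.length = n) :
    ∃ σ : Equiv.Perm (Fin (m + n)), ∀ i j : Fin (m + n + 1),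
      Hsem a b m i j = (j : ℕ) + (m : ℤ) - (i : ℕ) - distSum (PermMat σ) i j := by
  subst ha hb
  obtain ⟨σ, hσ⟩ := exists_perm_eq_distSum_of_crossDiff_nonneg (N := a.length + b.length)
    (fun i j => j + a.length - i - Hsem a b a.length i j)
    (fun i _ => by rw [Hsem_col_zero]; ring)
    (fun j hj => by rw [Hsem_row_last a b hj]; push_cast; ring)
    (fun j _ => by rw [Hsem_row_zero]; ring)
    (fun i hi => by rw [Hsem_col_last a b hi]; push_cast; ring)
    (fun p _ q hq => by
      have := Hsem_cross_le a b (p := p) hq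
      simp only [crossDiff]
      push_cast
      linarith)
  exact ⟨σ, fun i j => by rw [← hσ]; ring⟩
end

section
/- In the recursive step of fast implicit unit-Monge multiplication, the difference function δ(i,k) = Σ_{î<i, k̂<k} P_{C,hi}(î,k̂) − Σ_{î>i, k̂>k} P_{C,lo}(î,k̂) is unit-monotone increasing in each argument (each unit increment of i or k changes δ by 0 or +1), whenever P_{C,lo} and P_{C,hi} are subpermutation matrices over ⟨0:n | 0:n⟩ whose sum P_{C,lo} + P_{C,hi} is a permutation matrix. -/
/-- A subpermutation matrix: a 0-1 matrix with at most one nonzero in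
every row and every column. -/
def IsSubperm {n : ℕ} (P : Fin n → Fin n → ℤ) : Prop :=
  (∀ i j, P i j = 0 ∨ P i j = 1) ∧ (∀ i, ∑ j, P i j ≤ 1) ∧ (∀ j, ∑ i, P i j ≤ 1)

/-- The difference function
`δ(i,k) = Σ_{î<i, k̂<k} P_hi(î,k̂) − Σ_{î>i, k̂>k} P_lo(î,k̂)`
(sums over half-integers `î ∈ ⟨0:i⟩, k̂ ∈ ⟨0:k⟩` resp. `î ∈ ⟨i:n⟩, k̂ ∈ ⟨k:n⟩`). -/
def delta {n : ℕ} (Plo Phi : Fin n → Fin n → ℤ) (i k : Fin (n+1)) : ℤ :=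
  (∑ p : Fin n, ∑ q : Fin n, if (p : ℕ) < (i : ℕ) ∧ (q : ℕ) < (k : ℕ) then Phi p q else 0)
  - (∑ p : Fin n, ∑ q : Fin n, if (i : ℕ) ≤ (p : ℕ) ∧ (k : ℕ) ≤ (q : ℕ) then Plo p q else 0)

namespace IsSubperm

variable {n : ℕ} {P : Fin n → Fin n → ℤ}

lemma nonneg (hP : IsSubperm P) (i j : Fin n) : 0 ≤ P i j := by
  rcases hP.1 i j with h | h <;> simp [h]

end IsSubperm

lemma sum_PermMat_row {n : ℕ} (σ : Equiv.Perm (Fin n)) (i : Fin n) :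
    ∑ j, PermMat σ i j = 1 := by
  simp [PermMat]

lemma sum_PermMat_col {n : ℕ} (σ : Equiv.Perm (Fin n)) (j : Fin n) :
    ∑ i, PermMat σ i j = 1 := by
  simp [PermMat, ← Equiv.eq_symm_apply]

lemma Finset.sum_ite_mem_zero_one {ι : Type*} [Fintype ι] (p : ι → Prop) [DecidablePred p]
    {f g : ι → ℤ} (hf : ∀ x, 0 ≤ f x) (hg : ∀ x, 0 ≤ g x) (h : ∑ x, (f x + g x) = 1) :
    ∑ x, (if p x then g x else f x) ∈ ({0, 1} : Set ℤ) := by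
  have hle : ∑ x, (if p x then g x else f x) ≤ 1 := h ▸ Finset.sum_le_sum fun x _ => by
    split_ifs <;> linarith [hf x, hg x]
  have hnn : 0 ≤ ∑ x, (if p x then g x else f x) := Finset.sum_nonneg fun x _ => by
    split_ifs <;> simp only [hf x, hg x]
  simp only [Set.mem_insert_iff, Set.mem_singleton_iff]
  omega

section delta

variable {n : ℕ} (Plo Phi : Fin n → Fin n → ℤ)

lemma delta_flip (i k : Fin (n+1)) : delta (flip Plo) (flip Phi) k i = delta Plo Phi i k := by
  unfold delta
  congr 1 <;> rw [Finset.sum_comm] <;> simp only [flip, and_comm]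

lemma delta_succ_sub_castSucc (i : Fin n) (k : Fin (n+1)) :
    delta Plo Phi i.succ k - delta Plo Phi i.castSucc k
      = ∑ q : Fin n, if (q : ℕ) < k then Phi i q else Plo i q := by
  rw [← Fintype.sum_ite_eq' i (fun p => ∑ q : Fin n, if (q : ℕ) < k then Phi p q else Plo p q)]
  simp only [delta, ← Finset.sum_sub_distrib]
  refine Finset.sum_congr rfl fun p _ => ?_
  rw [Finset.ite_sum_zero]
  refine Finset.sum_congr rfl fun q _ => ?_
  simp only [Fin.val_succ, Fin.val_castSucc]
  rcases eq_or_ne p i with rfl | hpi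
  · split_ifs <;> omega
  · have : (p : ℕ) ≠ i := Fin.val_ne_of_ne hpi
    split_ifs <;> omega

lemma delta_succ_sub_castSucc_mem (hlo : ∀ i j, 0 ≤ Plo i j) (hhi : ∀ i j, 0 ≤ Phi i j)
    (hrow : ∀ i, ∑ j, (Plo i j + Phi i j) = 1) (i : Fin n) (k : Fin (n+1)) :
    delta Plo Phi i.succ k - delta Plo Phi i.castSucc k ∈ ({0, 1} : Set ℤ) := by
  rw [delta_succ_sub_castSucc]
  exact Finset.sum_ite_mem_zero_one _ (hlo i) (hhi i) (hrow i)

end delta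

/-- whenever `P_lo`, `P_hi` are subpermutation matrices whose sum
is a permutation matrix, the function `δ` is unit-monotone increasing in each
argument: each unit increment of `i` or `k` changes `δ` by `0` or `+1`. -/
theorem delta_unit_monotone {n : ℕ} (Plo Phi : Fin n → Fin n → ℤ)
    (hlo : IsSubperm Plo) (hhi : IsSubperm Phi)
    (hsum : ∃ σ : Equiv.Perm (Fin n), ∀ i j, Plo i j + Phi i j = PermMat σ i j) :
    (∀ (i : Fin n) (k : Fin (n+1)),
        delta Plo Phi i.succ k - delta Plo Phi i.castSucc k ∈ ({0, 1} : Set ℤ)) ∧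
    (∀ (i : Fin (n+1)) (k : Fin n),
        delta Plo Phi i k.succ - delta Plo Phi i k.castSucc ∈ ({0, 1} : Set ℤ)) := by
  obtain ⟨σ, hσ⟩ := hsum
  refine ⟨delta_succ_sub_castSucc_mem Plo Phi hlo.nonneg hhi.nonneg fun i => ?_, fun i k => ?_⟩
  · simp only [hσ, sum_PermMat_row]
  · rw [← delta_flip Plo Phi i k.succ, ← delta_flip Plo Phi i k.castSucc]
    exact delta_succ_sub_castSucc_mem _ _ (fun a b => hlo.nonneg b a) (fun a b => hhi.nonneg b a)
      (fun j => by simp only [hσ, sum_PermMat_col]) k i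
end
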